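/- arXiv:1508.04651 — 2 statements merged into one kernel-verified Lean document; each statement's English description precedes it below -/
import Mathlib

section
/- Let (A,B,C) be a bipartite LR triple on V of diameter d ≥ 2, with parameter sequences {φ_i}, {φ'_i}, {φ''_i} of the LR pairs (A,B), (B,C), (C,A). Then for 2 ≤ i ≤ d−1 one has φ_{i−1} ≠ φ_{i+1}, φ'_{i−1} ≠ φ'_{i+1}, and φ''_{i−1} ≠ φ''_{i+1}. -/
/-- A decomposition of `V` of diameter `d`: a sequence of one-dimensional subspaces
`sub 0, …, sub d` whose (direct) sum is `V`; by convention `sub i = ⊥` for `i > d`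
(encoding `V_{-1} = 0` and `V_{d+1} = 0`). -/
structure LRDecomp (F : Type*) [Field F] (V : Type*) [AddCommGroup V] [Module F V]
    (d : ℕ) where
  sub : ℕ → Submodule F V
  finrank_eq_one : ∀ i ≤ d, Module.finrank F (sub i) = 1
  eq_bot_of_gt : ∀ i, d < i → sub i = ⊥
  isInternal : DirectSum.IsInternal fun i : Fin (d + 1) => sub i.val

variable {F : Type*} [Field F] {V : Type*} [AddCommGroup V] [Module F V]

/-- `A` lowers the decomposition: `A V_i = V_{i-1}` for `0 ≤ i ≤ d` (with `V_{-1} = 0`). -/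
def Lowers {d : ℕ} (A : Module.End F V) (D : LRDecomp F V d) : Prop :=
  Submodule.map A (D.sub 0) = ⊥ ∧ ∀ i < d, Submodule.map A (D.sub (i + 1)) = D.sub i

/-- `B` raises the decomposition: `B V_i = V_{i+1}` for `0 ≤ i ≤ d` (with `V_{d+1} = 0`). -/
def Raises {d : ℕ} (B : Module.End F V) (D : LRDecomp F V d) : Prop :=
  ∀ i ≤ d, Submodule.map B (D.sub i) = D.sub (i + 1)

/-- `D` is the (A,B)-decomposition: it is lowered by `A` and raised by `B`. -/
def IsLRPairWith {d : ℕ} (A B : Module.End F V) (D : LRDecomp F V d) : Prop :=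
  Lowers A D ∧ Raises B D

/-- `(A,B,C)` is an LR triple of diameter `d`. -/
def IsLRTriple (d : ℕ) (A B C : Module.End F V) : Prop :=
  (∃ D : LRDecomp F V d, IsLRPairWith A B D) ∧
  (∃ D : LRDecomp F V d, IsLRPairWith B C D) ∧
  (∃ D : LRDecomp F V d, IsLRPairWith C A D)

/-- `X` is tridiagonal with respect to the decomposition `D`:
`X V_i ⊆ V_{i-1} + V_i + V_{i+1}` (note `V_{0-1} ⊔ V_0 = V_0` makes `ℕ`-subtraction correct). -/
def IsTridiagonal {d : ℕ} (X : Module.End F V) (D : LRDecomp F V d) : Prop :=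
  ∀ i, ∀ v ∈ D.sub i, X v ∈ D.sub (i - 1) ⊔ D.sub i ⊔ D.sub (i + 1)

/-- The tridiagonal space of the LR triple with decompositions `D₁, D₂, D₃`. -/
def tridiagSpace {d : ℕ} (D₁ D₂ D₃ : LRDecomp F V d) : Submodule F (Module.End F V) where
  carrier := {X | IsTridiagonal X D₁ ∧ IsTridiagonal X D₂ ∧ IsTridiagonal X D₃}
  add_mem' := by
    rintro X Y ⟨hX1, hX2, hX3⟩ ⟨hY1, hY2, hY3⟩
    exact ⟨fun i v hv => by simpa using add_mem (hX1 i v hv) (hY1 i v hv),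
           fun i v hv => by simpa using add_mem (hX2 i v hv) (hY2 i v hv),
           fun i v hv => by simpa using add_mem (hX3 i v hv) (hY3 i v hv)⟩
  zero_mem' :=
    ⟨fun i v _ => by simp,
     fun i v _ => by simp,
     fun i v _ => by simp⟩
  smul_mem' := by
    rintro c X ⟨hX1, hX2, hX3⟩
    exact ⟨fun i v hv => by simpa using Submodule.smul_mem _ c (hX1 i v hv),
           fun i v hv => by simpa using Submodule.smul_mem _ c (hX2 i v hv),
           fun i v hv => by simpa using Submodule.smul_mem _ c (hX3 i v hv)⟩

/-- `E` is the idempotent sequence of the decomposition `D`: each `E i` acts as the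
identity on `sub i` and as zero on `sub j` for `j ≠ i`. -/
def IsIdemSeq {d : ℕ} (D : LRDecomp F V d) (E : ℕ → Module.End F V) : Prop :=
  ∀ i, (∀ v ∈ D.sub i, E i v = v) ∧ ∀ j, j ≠ i → ∀ v ∈ D.sub j, E i v = 0

/-- Bipartite: all trace data `a_i = tr(C E_i)`, `a'_i = tr(A E'_i)`, `a''_i = tr(B E''_i)`
vanish, where `E, E', E''` are the idempotent data of the triple `(A,B,C)`. -/
def IsBipartite (d : ℕ) (A B C : Module.End F V)
    (E E' E'' : ℕ → Module.End F V) : Prop :=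
  ∀ i ≤ d, LinearMap.trace F V (C * E i) = 0 ∧
    LinearMap.trace F V (A * E' i) = 0 ∧ LinearMap.trace F V (B * E'' i) = 0

/-- An LR pair `(A,B)` has `q`-Weyl type. -/
def IsQWeylPair (q : F) (A B : Module.End F V) : Prop :=
  q ≠ 0 ∧ q ^ 2 ≠ 1 ∧ q • (A * B) - q⁻¹ • (B * A) = (q - q⁻¹) • (1 : Module.End F V)

/-- An LR triple `(A,B,C)` has `q`-Weyl type. -/
def IsQWeylTriple (q : F) (A B C : Module.End F V) : Prop :=
  IsQWeylPair q A B ∧ IsQWeylPair q B C ∧ IsQWeylPair q C A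

/-- `v` is an `(A,B)`-basis, relative to the `(A,B)`-decomposition `D`:
`v i ∈ sub i` is nonzero and `A v_i = v_{i-1}`. -/
def IsLRBasisFor {d : ℕ} (A : Module.End F V) (D : LRDecomp F V d) (v : ℕ → V) : Prop :=
  (∀ i ≤ d, v i ∈ D.sub i ∧ v i ≠ 0) ∧ ∀ i, 1 ≤ i → i ≤ d → A (v i) = v (i - 1)

/-- `v` is a `(B,A)`-style basis relative to the `(A,B)`-decomposition `D` of the
reversed pair: `v i ∈ sub (d-i)` is nonzero and the lowering map sends `v i ↦ v (i-1)`.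
(Used for `(C,B)`-bases relative to the `(B,C)`-decomposition, etc.) -/
def IsLRBasisRev {d : ℕ} (A : Module.End F V) (D : LRDecomp F V d) (v : ℕ → V) : Prop :=
  (∀ i ≤ d, v i ∈ D.sub (d - i) ∧ v i ≠ 0) ∧ ∀ i, 1 ≤ i → i ≤ d → A (v i) = v (i - 1)

/-- The transition matrix from the basis `u` to the basis `w` is upper triangular
Toeplitz with parameters `α`: `w j = ∑_{i ≤ j} α_{j-i} u_i`. -/
def IsToeplitzTransition (d : ℕ) (u w : ℕ → V) (α : ℕ → F) : Prop :=
  ∀ j ≤ d, w j = ∑ i ∈ Finset.range (j + 1), α (j - i) • u i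

/-- `φ` is the parameter sequence of the LR pair `(A,B)` with `(A,B)`-decomposition `D`:
`BA` acts on `V_i` as `φ i` for `1 ≤ i ≤ d`, with conventions `φ 0 = 0 = φ (d+1)`. -/
def IsParamSeq {d : ℕ} (A B : Module.End F V) (D : LRDecomp F V d) (φ : ℕ → F) : Prop :=
  φ 0 = 0 ∧ φ (d + 1) = 0 ∧ ∀ i, 1 ≤ i → i ≤ d → ∀ v ∈ D.sub i, B (A v) = φ i • v

/-!
Write `L_m = V_0 + ⋯ + V_m` and `U_m = V_m + ⋯ + V_d` for the flags of a decomposition. If `X`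
raises one decomposition and lowers another, then `U_m` of the first and `L_{d-m}` of the second
are both the range of `X ^ m`, so they coincide. Applied to the `(A,B)`-decomposition, this shows
that `C` maps `U_{k+1}` into `U_k` (through `B`) and `L_k` into `L_{k+1}` but not into `L_k`
(through `A`), while bipartiteness kills the diagonal of `C`. Hence, in a basis `v_k ∈ V_k`, the
matrix of `C B` is lower triangular with zero first subdiagonal and nonzero entries at
`(k+2, k)`. The nonzero vectors of `V'_j` are eigenvectors of `C B` for `φ'_j` with lowest
index `d - j`, so `φ'_j` is the diagonal entry at `d - j`; the coordinate `d - i + 1` of the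
eigenvector equation for `V'_{i+1}` then forces `φ'_{i-1} ≠ φ'_{i+1}`. The claims for `φ` and
`φ''` follow by rotating the triple.
-/

namespace LRDecomp

variable {d : ℕ} (D : LRDecomp F V d)

def lowerFlag (m : ℕ) : Submodule F V := ⨆ (i : ℕ) (_ : i ≤ m), D.sub i

def upperFlag (m : ℕ) : Submodule F V := ⨆ (i : ℕ) (_ : m ≤ i), D.sub i

lemma sub_le_lowerFlag {i m : ℕ} (h : i ≤ m) : D.sub i ≤ D.lowerFlag m :=
  le_iSup₂_of_le i h le_rfl

lemma sub_le_upperFlag {i m : ℕ} (h : m ≤ i) : D.sub i ≤ D.upperFlag m :=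
  le_iSup₂_of_le i h le_rfl

lemma upperFlag_eq_bot {m : ℕ} (h : d < m) : D.upperFlag m = ⊥ :=
  eq_bot_iff.2 <| iSup₂_le fun i hi => (D.eq_bot_of_gt i (by omega)).le

lemma iSup_sub : ⨆ i, D.sub i = ⊤ :=
  top_le_iff.1 <| D.isInternal.submodule_iSup_eq_top.ge.trans <| iSup_le fun i => le_iSup D.sub i

lemma sub_ne_bot {i : ℕ} (h : i ≤ d) : D.sub i ≠ ⊥ := by
  intro hbot
  have := D.finrank_eq_one i h
  rw [hbot, finrank_bot] at this
  exact zero_ne_one this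

lemma exists_mem_ne_zero {i : ℕ} (h : i ≤ d) : ∃ x ∈ D.sub i, x ≠ 0 :=
  Submodule.exists_mem_ne_zero_of_ne_bot (D.sub_ne_bot h)

lemma lowerFlag_mono : Monotone D.lowerFlag := fun _ _ hmn =>
  iSup₂_le fun _ hi => D.sub_le_lowerFlag (hi.trans hmn)

lemma disjoint_sub_iSup {i : ℕ} {s : Set ℕ} (hi : i ∉ s) :
    Disjoint (D.sub i) (⨆ j ∈ s, D.sub j) := by
  rcases le_or_gt i d with hid | hid
  · refine (D.isInternal.submodule_iSupIndep.disjoint_biSup (x := ⟨i, by omega⟩)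
      (y := {j | j.val ∈ s}) (by simpa using hi)).mono_right (iSup₂_le fun j hj => ?_)
    rcases le_or_gt j d with hjd | hjd
    · exact le_iSup₂_of_le (⟨j, by omega⟩ : Fin (d + 1)) hj le_rfl
    · simp [D.eq_bot_of_gt j hjd]
  · simp [D.eq_bot_of_gt i hid]

lemma disjoint_sub_lowerFlag {i m : ℕ} (h : m < i) : Disjoint (D.sub i) (D.lowerFlag m) :=
  D.disjoint_sub_iSup (s := {j | j ≤ m}) (by simpa using h)

lemma disjoint_sub_upperFlag {i m : ℕ} (h : i < m) : Disjoint (D.sub i) (D.upperFlag m) :=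
  D.disjoint_sub_iSup (s := {j | m ≤ j}) (by simpa using h)

lemma sub_eq_span_singleton {i : ℕ} (hi : i ≤ d) {x : V} (hx : x ∈ D.sub i) (hx0 : x ≠ 0) :
    D.sub i = F ∙ x := by
  have := Module.finite_of_finrank_eq_succ (D.finrank_eq_one i hi)
  refine (Submodule.eq_of_le_of_finrank_eq ((Submodule.span_singleton_le_iff_mem _ _).2 hx) ?_).symm
  rw [D.finrank_eq_one i hi, finrank_span_singleton hx0]

end LRDecomp

section RaisingLowering

variable {d : ℕ} {D D₁ D₂ : LRDecomp F V d} {A B X : Module.End F V}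

lemma Raises.map_sub (h : Raises B D) (i : ℕ) : (D.sub i).map B = D.sub (i + 1) := by
  rcases le_or_gt i d with hi | hi
  · exact h i hi
  · rw [D.eq_bot_of_gt i hi, D.eq_bot_of_gt (i + 1) (by omega), Submodule.map_bot]

lemma Raises.map_pow_sub (h : Raises B D) (m i : ℕ) : (D.sub i).map (B ^ m) = D.sub (i + m) := by
  induction m with
  | zero => rw [pow_zero, Module.End.one_eq_id, Submodule.map_id, add_zero]
  | succ m ih =>
    rw [pow_succ', Module.End.mul_eq_comp, Submodule.map_comp, ih, h.map_sub, add_assoc]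

lemma Raises.range_pow (h : Raises B D) (m : ℕ) : LinearMap.range (B ^ m) = D.upperFlag m := by
  rw [LinearMap.range_eq_map, ← D.iSup_sub, Submodule.map_iSup]
  simp_rw [h.map_pow_sub]
  exact le_antisymm (iSup_le fun i => D.sub_le_upperFlag (by omega))
    (iSup₂_le fun j hj => le_iSup_of_le (j - m) (by rw [Nat.sub_add_cancel hj]))

lemma Raises.map_lowerFlag_le (h : Raises B D) (m : ℕ) :
    (D.lowerFlag m).map B ≤ D.lowerFlag (m + 1) :=
  Submodule.map_le_iff_le_comap.2 <| iSup₂_le fun i hi => Submodule.map_le_iff_le_comap.1 <|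
    (h.map_sub i).le.trans (D.sub_le_lowerFlag (by omega))

lemma Raises.apply_ne_zero (h : Raises B D) {i : ℕ} (hi : i < d) {x : V} (hx : x ∈ D.sub i)
    (hx0 : x ≠ 0) : B x ≠ 0 := by
  intro hBx
  have := h.map_sub i
  rw [D.sub_eq_span_singleton hi.le hx hx0, Submodule.map_span, Set.image_singleton, hBx,
    Submodule.span_singleton_eq_bot.2 rfl] at this
  exact D.sub_ne_bot hi this.symm

lemma Lowers.map_sub_succ_le (h : Lowers A D) (i : ℕ) : (D.sub (i + 1)).map A ≤ D.sub i := by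
  rcases lt_or_ge i d with hi | hi
  · exact (h.2 i hi).le
  · rw [D.eq_bot_of_gt (i + 1) (by omega), Submodule.map_bot]
    exact bot_le

lemma Lowers.map_pow_sub_add (h : Lowers A D) {i m : ℕ} (hi : i + m ≤ d) :
    (D.sub (i + m)).map (A ^ m) = D.sub i := by
  induction m with
  | zero => rw [pow_zero, Module.End.one_eq_id, Submodule.map_id, add_zero]
  | succ m ih =>
    rw [pow_succ, Module.End.mul_eq_comp, Submodule.map_comp, ← add_assoc, h.2 _ (by omega),
      ih (by omega)]

lemma Lowers.map_pow_sub_eq_bot (h : Lowers A D) {i m : ℕ} (hi : i < m) :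
    (D.sub i).map (A ^ m) = ⊥ := by
  rcases le_or_gt i d with hid | hid
  · obtain ⟨k, rfl⟩ := Nat.exists_eq_add_of_lt hi
    have h0 := h.map_pow_sub_add (i := 0) (m := i) (by omega)
    rw [zero_add] at h0
    rw [show i + k + 1 = k + 1 + i by omega, pow_add, Module.End.mul_eq_comp, Submodule.map_comp,
      h0, pow_succ, Module.End.mul_eq_comp, Submodule.map_comp, h.1, Submodule.map_bot]
  · rw [D.eq_bot_of_gt i hid, Submodule.map_bot]

lemma Lowers.range_pow (h : Lowers A D) {m : ℕ} (hm : m ≤ d) :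
    LinearMap.range (A ^ m) = D.lowerFlag (d - m) := by
  rw [LinearMap.range_eq_map, ← D.iSup_sub, Submodule.map_iSup]
  refine le_antisymm (iSup_le fun i => ?_)
    (iSup₂_le fun j hj => le_iSup_of_le (j + m) (h.map_pow_sub_add (by omega)).ge)
  rcases lt_or_ge i m with him | hmi
  · rw [h.map_pow_sub_eq_bot him]
    exact bot_le
  rcases le_or_gt i d with hid | hid
  · obtain ⟨j, rfl⟩ := Nat.exists_eq_add_of_le' hmi
    rw [h.map_pow_sub_add hid]
    exact D.sub_le_lowerFlag (by omega)
  · rw [D.eq_bot_of_gt i hid, Submodule.map_bot]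
    exact bot_le

lemma Lowers.map_upperFlag_le (h : Lowers A D) (m : ℕ) :
    (D.upperFlag (m + 1)).map A ≤ D.upperFlag m :=
  Submodule.map_le_iff_le_comap.2 <| iSup₂_le fun i hi => by
    obtain ⟨j, rfl⟩ := Nat.exists_eq_add_of_le' (show 1 ≤ i by omega)
    exact Submodule.map_le_iff_le_comap.1 <|
      (h.map_sub_succ_le j).trans (D.sub_le_upperFlag (by omega))

lemma Lowers.not_map_upperFlag_le (h : Lowers A D) {m : ℕ} (hm : m < d) :
    ¬ (D.upperFlag (m + 1)).map A ≤ D.upperFlag (m + 1) := by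
  intro hle
  have hsub : D.sub m ≤ D.upperFlag (m + 1) :=
    h.2 m hm ▸ (Submodule.map_mono (D.sub_le_upperFlag le_rfl)).trans hle
  exact D.sub_ne_bot hm.le ((D.disjoint_sub_upperFlag (Nat.lt_succ_self m)).eq_bot_of_le hsub)

lemma Raises.upperFlag_eq_lowerFlag (h₁ : Raises X D₁) (h₂ : Lowers X D₂) {m : ℕ} (hm : m ≤ d) :
    D₁.upperFlag m = D₂.lowerFlag (d - m) := by
  rw [← h₁.range_pow, h₂.range_pow hm]

lemma Raises.lowerFlag_eq_upperFlag (h₁ : Raises X D₁) (h₂ : Lowers X D₂) {m : ℕ} (hm : m ≤ d) :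
    D₂.lowerFlag m = D₁.upperFlag (d - m) := by
  rw [h₁.upperFlag_eq_lowerFlag h₂ (Nat.sub_le d m), Nat.sub_sub_self hm]

end RaisingLowering

namespace LRDecomp

variable {d : ℕ} (D : LRDecomp F V d)

/-- Extending `v` and `co` by zero beyond `d` lets the coordinate identities hold at every
index. -/
structure IsAdaptedBasis (v : ℕ → V) (co : ℕ → V →ₗ[F] F) : Prop where
  mem : ∀ k, v k ∈ D.sub k
  sum_coord_smul : ∀ x, ∑ k ∈ Finset.range (d + 1), co k x • v k = x
  coord_apply : ∀ k ≤ d, ∀ m, co m (v k) = if m = k then 1 else 0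
  coord_eq_zero : ∀ m, d < m → co m = 0

lemma exists_isAdaptedBasis : ∃ v co, D.IsAdaptedBasis v co := by
  have hchoice : ∀ i, ∃ x ∈ D.sub i, i ≤ d → x ≠ 0 := fun i => by
    by_cases hi : i ≤ d
    · obtain ⟨x, hx, hx0⟩ := D.exists_mem_ne_zero hi
      exact ⟨x, hx, fun _ => hx0⟩
    · exact ⟨0, zero_mem _, fun h => absurd h hi⟩
  choose v hv hv0 using hchoice
  have hli : LinearIndependent F fun i : Fin (d + 1) => v i :=
    D.isInternal.submodule_iSupIndep.linearIndependent _ (fun i => hv i)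
      (fun i => hv0 i (Nat.lt_succ_iff.1 i.isLt))
  have hsp : ⊤ ≤ Submodule.span F (Set.range fun i : Fin (d + 1) => v i) := by
    rw [Submodule.span_range_eq_iSup, ← D.isInternal.submodule_iSup_eq_top]
    exact iSup_mono fun i =>
      have hi := Nat.lt_succ_iff.1 i.isLt
      (D.sub_eq_span_singleton hi (hv i) (hv0 i hi)).le
  let b := Module.Basis.mk hli hsp
  refine ⟨v, fun m => if h : m ≤ d then b.coord ⟨m, by omega⟩ else 0, hv, fun x => ?_,
    fun k hk m => ?_, fun m hm => dif_neg (by omega)⟩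
  · rw [← Fin.sum_univ_eq_sum_range (fun k => _ • v k)]
    conv_rhs => rw [← b.sum_repr x]
    refine Finset.sum_congr rfl fun i _ => ?_
    rw [dif_pos (Nat.lt_succ_iff.1 i.isLt), Module.Basis.mk_apply]
    rfl
  · by_cases hm : m ≤ d
    · have hvk : v k = b ⟨k, by omega⟩ := (Module.Basis.mk_apply hli hsp ⟨k, by omega⟩).symm
      rw [dif_pos hm, hvk, Module.Basis.coord_apply, Module.Basis.repr_self, Finsupp.single_apply]
      simp [Fin.ext_iff, eq_comm]
    · rw [dif_neg hm, if_neg (by omega)]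
      rfl

end LRDecomp

namespace LRDecomp.IsAdaptedBasis

variable {d : ℕ} {D : LRDecomp F V d} {v : ℕ → V} {co : ℕ → V →ₗ[F] F}
  (hb : D.IsAdaptedBasis v co)
include hb

lemma coord_apply_self {k : ℕ} (hk : k ≤ d) : co k (v k) = 1 := by
  rw [hb.coord_apply k hk, if_pos rfl]

lemma ne_zero {k : ℕ} (hk : k ≤ d) : v k ≠ 0 := fun h => by
  simpa [h] using hb.coord_apply_self hk

lemma eq_coord_smul_of_mem {k : ℕ} {x : V} (hx : x ∈ D.sub k) : x = co k x • v k := by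
  rcases le_or_gt k d with hk | hk
  · obtain ⟨c, rfl⟩ := Submodule.mem_span_singleton.1
      ((D.sub_eq_span_singleton hk (hb.mem k) (hb.ne_zero hk)) ▸ hx)
    rw [map_smul, hb.coord_apply_self hk, smul_eq_mul, mul_one]
  · rw [D.eq_bot_of_gt k hk, Submodule.mem_bot] at hx
    simp [hx]

lemma coord_eq_zero_of_mem {i k : ℕ} (hki : k ≠ i) {x : V} (hx : x ∈ D.sub i) : co k x = 0 := by
  rcases le_or_gt i d with hi | hi
  · rw [hb.eq_coord_smul_of_mem hx, map_smul, hb.coord_apply i hi, if_neg hki, smul_zero]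
  · rw [D.eq_bot_of_gt i hi, Submodule.mem_bot] at hx
    rw [hx, map_zero]

lemma coord_apply_map (T : Module.End F V) (x : V) (m : ℕ) :
    co m (T x) = ∑ k ∈ Finset.range (d + 1), co k x * co m (T (v k)) := by
  conv_lhs => rw [← hb.sum_coord_smul x]
  simp only [map_sum, map_smul, smul_eq_mul]

lemma mem_upperFlag_iff {m : ℕ} {x : V} : x ∈ D.upperFlag m ↔ ∀ k < m, co k x = 0 := by
  refine ⟨fun hx k hk => ?_, fun hx => ?_⟩
  · have : D.upperFlag m ≤ LinearMap.ker (co k) := iSup₂_le fun i hi y hy =>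
      hb.coord_eq_zero_of_mem (by omega) hy
    exact this hx
  · rw [← hb.sum_coord_smul x]
    refine Submodule.sum_mem _ fun k _ => ?_
    rcases lt_or_ge k m with hk | hk
    · rw [hx k hk, zero_smul]
      exact zero_mem _
    · exact Submodule.smul_mem _ _ (D.sub_le_upperFlag hk (hb.mem k))

lemma mem_lowerFlag_iff {m : ℕ} {x : V} : x ∈ D.lowerFlag m ↔ ∀ k, m < k → co k x = 0 := by
  refine ⟨fun hx k hk => ?_, fun hx => ?_⟩
  · have : D.lowerFlag m ≤ LinearMap.ker (co k) := iSup₂_le fun i hi y hy =>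
      hb.coord_eq_zero_of_mem (by omega) hy
    exact this hx
  · rw [← hb.sum_coord_smul x]
    refine Submodule.sum_mem _ fun k _ => ?_
    rcases le_or_gt k m with hk | hk
    · exact Submodule.smul_mem _ _ (D.sub_le_lowerFlag hk (hb.mem k))
    · rw [hx k hk, zero_smul]
      exact zero_mem _

lemma apply_idem {E : ℕ → Module.End F V} (hE : IsIdemSeq D E) {k : ℕ} (hk : k ≤ d) (x : V) :
    E k x = co k x • v k := by
  conv_lhs => rw [← hb.sum_coord_smul x]
  rw [map_sum, Finset.sum_eq_single_of_mem k (Finset.mem_range.2 (by omega))]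
  · rw [map_smul, (hE k).1 _ (hb.mem k)]
  · intro j _ hjk
    rw [map_smul, (hE k).2 j hjk _ (hb.mem j), smul_zero]

lemma trace_mul_idem [FiniteDimensional F V] {E : ℕ → Module.End F V} (hE : IsIdemSeq D E)
    (X : Module.End F V) {k : ℕ} (hk : k ≤ d) :
    LinearMap.trace F V (X * E k) = co k (X (v k)) := by
  have : X * E k = (co k).smulRight (X (v k)) := by
    ext x
    simp [hb.apply_idem hE hk]
  rw [this, LinearMap.trace_smulRight]

variable {T : Module.End F V} {w : V} {μ : F} {n : ℕ}

lemma coord_self_eq_eigenvalue (hT : ∀ m k, m < k → co m (T (v k)) = 0) (hTw : T w = μ • w)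
    (hlow : ∀ k < n, co k w = 0) (hn : co n w ≠ 0) : co n (T (v n)) = μ := by
  have h := congrArg (co n) hTw
  rw [hb.coord_apply_map, map_smul, smul_eq_mul, Finset.sum_eq_single n] at h
  · exact mul_left_cancel₀ hn (h.trans (mul_comm _ _))
  · intro k _ hkn
    rcases lt_or_gt_of_ne hkn with hk | hk
    · rw [hlow k hk, zero_mul]
    · rw [hT n k hk, mul_zero]
  · intro hn'
    rw [hb.coord_eq_zero n (by simpa using hn'), LinearMap.zero_apply, zero_mul]

/-- The coordinate `n + 2` of `T w = μ • w` reads `co n w * co (n+2) (T (v n)) = 0` once the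
diagonal entry at `n + 2` equals `μ`. -/
lemma coord_self_add_two_ne_eigenvalue (hT : ∀ m k, m < k → co m (T (v k)) = 0)
    (hodd : co (n + 2) (T (v (n + 1))) = 0) (hne : co (n + 2) (T (v n)) ≠ 0)
    (hTw : T w = μ • w) (hlow : ∀ k < n, co k w = 0) (hn : co n w ≠ 0) :
    co (n + 2) (T (v (n + 2))) ≠ μ := by
  intro hdiag
  have h := congrArg (co (n + 2)) hTw
  rw [hb.coord_apply_map, map_smul, smul_eq_mul, Finset.sum_eq_add n (n + 2) (by omega)] at h
  · rw [hdiag] at h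
    exact hne ((mul_eq_zero.1 (by linear_combination h)).resolve_left hn)
  · rintro k - ⟨hkn, hkn2⟩
    rcases lt_trichotomy k (n + 1) with hk | rfl | hk
    · rw [hlow k (by omega), zero_mul]
    · rw [hodd, mul_zero]
    · rw [hT _ _ (by omega), mul_zero]
  · intro hn'
    rw [hb.coord_eq_zero n (by simpa using hn'), LinearMap.zero_apply, zero_mul]
  · intro hn'
    rw [hb.coord_eq_zero (n + 2) (by simpa using hn'), LinearMap.zero_apply, zero_mul]

end LRDecomp.IsAdaptedBasis

section Triple

variable {d : ℕ} {D₁ D₂ D₃ : LRDecomp F V d} {A B C : Module.End F V}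
  {v : ℕ → V} {co : ℕ → V →ₗ[F] F}

lemma map_upperFlag_succ_le (hB₁ : Raises B D₁) (hB₂ : Lowers B D₂) (hC₂ : Raises C D₂)
    (k : ℕ) : (D₁.upperFlag (k + 1)).map C ≤ D₁.upperFlag k := by
  rcases lt_or_ge k d with hk | hk
  · rw [hB₁.upperFlag_eq_lowerFlag hB₂ (m := k + 1) hk, hB₁.upperFlag_eq_lowerFlag hB₂ hk.le,
      show d - k = d - (k + 1) + 1 by omega]
    exact hC₂.map_lowerFlag_le _
  · rw [D₁.upperFlag_eq_bot (by omega), Submodule.map_bot]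
    exact bot_le

lemma map_lowerFlag_le (hA₃ : Raises A D₃) (hA₁ : Lowers A D₁) (hC₃ : Lowers C D₃) {k : ℕ}
    (hk : k < d) : (D₁.lowerFlag k).map C ≤ D₁.lowerFlag (k + 1) := by
  rw [hA₃.lowerFlag_eq_upperFlag hA₁ hk.le, hA₃.lowerFlag_eq_upperFlag hA₁ hk,
    show d - k = d - (k + 1) + 1 by omega]
  exact hC₃.map_upperFlag_le _

lemma not_map_lowerFlag_le (hA₃ : Raises A D₃) (hA₁ : Lowers A D₁) (hC₃ : Lowers C D₃) {k : ℕ}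
    (hk : k < d) : ¬ (D₁.lowerFlag k).map C ≤ D₁.lowerFlag k := by
  rw [hA₃.lowerFlag_eq_upperFlag hA₁ hk.le, show d - k = d - (k + 1) + 1 by omega]
  exact hC₃.not_map_upperFlag_le (by omega)

lemma coord_apply_eq_zero_of_lt (hb : D₁.IsAdaptedBasis v co) (hB₁ : Raises B D₁)
    (hB₂ : Lowers B D₂) (hC₂ : Raises C D₂) {m k : ℕ} (hmk : m < k) :
    co m (C (v (k + 1))) = 0 :=
  hb.mem_upperFlag_iff.1 (map_upperFlag_succ_le hB₁ hB₂ hC₂ k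
    (Submodule.mem_map_of_mem (D₁.sub_le_upperFlag le_rfl (hb.mem (k + 1))))) m hmk

/-- Otherwise `C (v k)` would lie in `D₁.lowerFlag k`, making that flag `C`-invariant. -/
lemma coord_succ_apply_ne_zero (hb : D₁.IsAdaptedBasis v co) (hA₃ : Raises A D₃)
    (hA₁ : Lowers A D₁) (hC₃ : Lowers C D₃) {k : ℕ} (hk : k < d) :
    co (k + 1) (C (v k)) ≠ 0 := by
  intro h0
  have hCv : C (v k) ∈ D₁.lowerFlag (k + 1) := map_lowerFlag_le hA₃ hA₁ hC₃ hk
    (Submodule.mem_map_of_mem (D₁.sub_le_lowerFlag le_rfl (hb.mem k)))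
  have hCv' : C (v k) ∈ D₁.lowerFlag k := hb.mem_lowerFlag_iff.2 fun m hm => by
    rcases (Nat.succ_le_of_lt hm).eq_or_lt with rfl | hm'
    · exact h0
    · exact hb.mem_lowerFlag_iff.1 hCv m hm'
  refine not_map_lowerFlag_le hA₃ hA₁ hC₃ hk <|
    Submodule.map_le_iff_le_comap.2 <| iSup₂_le fun i hi => ?_
  rcases hi.eq_or_lt with rfl | hik
  · intro x hx
    rw [Submodule.mem_comap, hb.eq_coord_smul_of_mem hx, map_smul]
    exact Submodule.smul_mem _ _ hCv'
  · exact Submodule.map_le_iff_le_comap.1 <|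
      ((Submodule.map_mono (D₁.sub_le_lowerFlag le_rfl)).trans
        (map_lowerFlag_le hA₃ hA₁ hC₃ (hik.trans hk))).trans (D₁.lowerFlag_mono hik)

lemma mem_upperFlag_of_mem_sub (hB₁ : Raises B D₁) (hB₂ : Lowers B D₂) {j : ℕ} (hj : j ≤ d)
    {w : V} (hw : w ∈ D₂.sub j) : w ∈ D₁.upperFlag (d - j) := by
  rw [← hB₁.lowerFlag_eq_upperFlag hB₂ hj]
  exact D₂.sub_le_lowerFlag le_rfl hw

lemma not_mem_upperFlag_of_mem_sub (hB₁ : Raises B D₁) (hB₂ : Lowers B D₂) {j : ℕ}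
    (hj1 : 1 ≤ j) (hj : j ≤ d) {w : V} (hw : w ∈ D₂.sub j) (hw0 : w ≠ 0) :
    w ∉ D₁.upperFlag (d - j + 1) := by
  rw [show d - j + 1 = d - (j - 1) by omega, ← hB₁.lowerFlag_eq_upperFlag hB₂ (by omega)]
  exact fun hw' => hw0 (Submodule.disjoint_def.1
    (D₂.disjoint_sub_lowerFlag (show j - 1 < j by omega)) w hw hw')

lemma coord_eq_zero_of_mem_sub (hb : D₁.IsAdaptedBasis v co) (hB₁ : Raises B D₁)
    (hB₂ : Lowers B D₂) {j : ℕ} (hj1 : 1 ≤ j) (hj : j ≤ d) {w : V} (hw : w ∈ D₂.sub j)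
    (hw0 : w ≠ 0) : (∀ k < d - j, co k w = 0) ∧ co (d - j) w ≠ 0 := by
  have hlow := hb.mem_upperFlag_iff.1 (mem_upperFlag_of_mem_sub hB₁ hB₂ hj hw)
  refine ⟨hlow, fun h0 => not_mem_upperFlag_of_mem_sub hB₁ hB₂ hj1 hj hw hw0 ?_⟩
  refine hb.mem_upperFlag_iff.2 fun k hk => ?_
  rcases (Nat.lt_succ_iff.1 hk).eq_or_lt with rfl | hk'
  · exact h0
  · exact hlow k hk'

theorem IsParamSeq.pred_ne_succ [FiniteDimensional F V] {E : ℕ → Module.End F V} {φ' : ℕ → F}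
    (hφ' : IsParamSeq B C D₂ φ') (hAB : IsLRPairWith A B D₁) (hBC : IsLRPairWith B C D₂)
    (hCA : IsLRPairWith C A D₃) (hE : IsIdemSeq D₁ E)
    (htr : ∀ k ≤ d, LinearMap.trace F V (C * E k) = 0) {i : ℕ} (hi2 : 2 ≤ i) (hid : i ≤ d - 1) :
    φ' (i - 1) ≠ φ' (i + 1) := by
  obtain ⟨v, co, hb⟩ := D₁.exists_isAdaptedBasis
  have hdiag : ∀ k, co k (C (v k)) = 0 := fun k => by
    rcases le_or_gt k d with hk | hk
    · rw [← hb.trace_mul_idem hE C hk, htr k hk]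
    · rw [hb.coord_eq_zero k hk, LinearMap.zero_apply]
  have hBv : ∀ k, B (v k) = co (k + 1) (B (v k)) • v (k + 1) := fun k =>
    hb.eq_coord_smul_of_mem (hAB.2.map_sub k ▸ Submodule.mem_map_of_mem (hb.mem k))
  have hT : ∀ m k, co m ((C * B) (v k)) = co (k + 1) (B (v k)) * co m (C (v (k + 1))) :=
    fun m k => by
      rw [Module.End.mul_apply]
      conv_lhs => rw [hBv k]
      rw [map_smul, map_smul, smul_eq_mul]
  have hupper : ∀ m k, m < k → co m ((C * B) (v k)) = 0 := fun m k hmk => by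
    rw [hT, coord_apply_eq_zero_of_lt hb hAB.2 hBC.1 hBC.2 hmk, mul_zero]
  set n := d - (i + 1) with hn
  have hne : co (n + 2) ((C * B) (v n)) ≠ 0 := by
    have hBv0 : co (n + 1) (B (v n)) ≠ 0 := fun h0 =>
      hAB.2.apply_ne_zero (by omega) (hb.mem n) (hb.ne_zero (by omega))
        (by rw [hBv n, h0, zero_smul])
    rw [hT]
    exact mul_ne_zero hBv0 (coord_succ_apply_ne_zero hb hCA.2 hAB.1 hCA.1 (by omega))
  obtain ⟨w₁, hw₁, hw₁0⟩ := D₂.exists_mem_ne_zero (show i + 1 ≤ d by omega)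
  obtain ⟨w₂, hw₂, hw₂0⟩ := D₂.exists_mem_ne_zero (show i - 1 ≤ d by omega)
  obtain ⟨hlow₁, hn₁⟩ := coord_eq_zero_of_mem_sub hb hAB.2 hBC.1 (by omega) (by omega) hw₁ hw₁0
  obtain ⟨hlow₂, hn₂⟩ := coord_eq_zero_of_mem_sub hb hAB.2 hBC.1 (by omega) (by omega) hw₂ hw₂0
  rw [show d - (i - 1) = n + 2 by omega] at hlow₂ hn₂
  rw [← hb.coord_self_eq_eigenvalue hupper (hφ'.2.2 _ (by omega) (by omega) w₂ hw₂) hlow₂ hn₂]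
  exact hb.coord_self_add_two_ne_eigenvalue hupper (by rw [hT, hdiag, mul_zero]) hne
    (hφ'.2.2 _ (by omega) (by omega) w₁ hw₁) hlow₁ hn₁

end Triple

theorem stmt13_general
    {F : Type*} [Field F] {V : Type*} [AddCommGroup V] [Module F V]
    [FiniteDimensional F V] {d : ℕ}
    (A B C : Module.End F V) (DAB DBC DCA : LRDecomp F V d)
    (hAB : IsLRPairWith A B DAB) (hBC : IsLRPairWith B C DBC) (hCA : IsLRPairWith C A DCA)
    (E E' E'' : ℕ → Module.End F V)
    (hE : IsIdemSeq DAB E) (hE' : IsIdemSeq DBC E') (hE'' : IsIdemSeq DCA E'')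
    (hbip : IsBipartite d A B C E E' E'')
    (φ φ' φ'' : ℕ → F)
    (hφ : IsParamSeq A B DAB φ) (hφ' : IsParamSeq B C DBC φ') (hφ'' : IsParamSeq C A DCA φ'') :
    ∀ i, 2 ≤ i → i ≤ d - 1 →
      φ (i - 1) ≠ φ (i + 1) ∧ φ' (i - 1) ≠ φ' (i + 1) ∧ φ'' (i - 1) ≠ φ'' (i + 1) := by
  intro i hi2 hid
  exact ⟨hφ.pred_ne_succ hCA hAB hBC hE'' (fun k hk => (hbip k hk).2.2) hi2 hid,
    hφ'.pred_ne_succ hAB hBC hCA hE (fun k hk => (hbip k hk).1) hi2 hid,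
    hφ''.pred_ne_succ hBC hCA hAB hE' (fun k hk => (hbip k hk).2.1) hi2 hid⟩

theorem stmt13
    {F : Type*} [Field F] {V : Type*} [AddCommGroup V] [Module F V]
    [FiniteDimensional F V] {d : ℕ} (hdim : Module.finrank F V = d + 1)
    (A B C : Module.End F V) (DAB DBC DCA : LRDecomp F V d)
    (hAB : IsLRPairWith A B DAB) (hBC : IsLRPairWith B C DBC) (hCA : IsLRPairWith C A DCA)
    (hd : 2 ≤ d)
    (E E' E'' : ℕ → Module.End F V)
    (hE : IsIdemSeq DAB E) (hE' : IsIdemSeq DBC E') (hE'' : IsIdemSeq DCA E'')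
    (hbip : IsBipartite d A B C E E' E'')
    (φ φ' φ'' : ℕ → F)
    (hφ : IsParamSeq A B DAB φ) (hφ' : IsParamSeq B C DBC φ') (hφ'' : IsParamSeq C A DCA φ'') :
    ∀ i, 2 ≤ i → i ≤ d - 1 →
      φ (i - 1) ≠ φ (i + 1) ∧ φ' (i - 1) ≠ φ' (i + 1) ∧ φ'' (i - 1) ≠ φ'' (i + 1) :=
  stmt13_general A B C DAB DBC DCA hAB hBC hCA E E' E'' hE hE' hE'' hbip φ φ' φ'' hφ hφ' hφ''
end

section
/- Let (A,B,C) be a nonbipartite normalized LR triple on V, with {E_i} the idempotent sequence of the (A,B)-decomposition, a_i = tr(C E_i), and {φ_i} the parameter sequence of the LR pair (A,B) (with φ_0 = 0 = φ_{d+1}). Then a_i = φ_{d−i+1} − φ_{d−i} for 0 ≤ i ≤ d. -/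
variable {F : Type*} [Field F] {V : Type*} [AddCommGroup V] [Module F V]

/-!
The trace `tr(X E_i)` is the `i`-th diagonal entry of `X` in any basis adapted to the
decomposition behind `E`. When `X` is a weighted shift on a second basis, related to the first by
a unitriangular Toeplitz matrix with superdiagonal entry `α₁`, that diagonal entry is `α₁` times a
difference of two consecutive weights. With `ψ` the parameter sequence of `(C,A)`, this gives
`a_i = α'₁ (ψ_{d-i+1} - ψ_{d-i})` (`C` shifts an `(A,C)`-basis) and, computing `a'_i` in two
bases, `α₁ (ψ_{d-i+1} - ψ_{d-i}) = a'_i = α''₁ (φ_{d-i+1} - φ_{d-i})`. Normalization makes all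
three factors `1`.
-/

lemma LRDecomp.exists_basis {d : ℕ} (D : LRDecomp F V d) {v : ℕ → V}
    (hv : ∀ j ≤ d, v j ∈ D.sub j ∧ v j ≠ 0) :
    ∃ b : Module.Basis (Fin (d + 1)) F V, ∀ j, b j = v j := by
  have hli : LinearIndependent F fun j : Fin (d + 1) => v j :=
    D.isInternal.submodule_iSupIndep.linearIndependent _ (fun j => (hv j j.is_le).1)
      (fun j => (hv j j.is_le).2)
  refine ⟨Module.Basis.mk hli ?_, fun j => Module.Basis.mk_apply _ _ _⟩
  rw [← D.isInternal.submodule_iSup_eq_top]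
  refine iSup_le fun j => ?_
  rw [eq_span_singleton_of_mem_of_finrank_eq_one (D.finrank_eq_one j j.is_le) (hv j j.is_le).1
    (hv j j.is_le).2]
  exact Submodule.span_mono (Set.singleton_subset_iff.mpr (Set.mem_range_self j))

lemma IsIdemSeq.exists_dual_trace_mul_eq {d : ℕ} {D : LRDecomp F V d} {E : ℕ → Module.End F V}
    (hE : IsIdemSeq D E) {v : ℕ → V} (hv : ∀ j ≤ d, v j ∈ D.sub j ∧ v j ≠ 0) {i : ℕ}
    (hi : i ≤ d) :
    ∃ f : Module.Dual F V, (∀ j ≤ d, f (v j) = if j = i then 1 else 0) ∧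
      ∀ X : Module.End F V, LinearMap.trace F V (X * E i) = f (X (v i)) := by
  obtain ⟨b, hb⟩ := D.exists_basis hv
  have := Module.Free.of_basis b
  have := Module.Finite.of_basis b
  set f := b.coord ⟨i, by omega⟩
  have hf : ∀ j ≤ d, f (v j) = if j = i then 1 else 0 := by
    intro j hj
    rw [← hb ⟨j, by omega⟩]
    simp [f, Finsupp.single_apply, Fin.ext_iff, eq_comm]
  have hEi : E i = f.smulRight (v i) := by
    refine b.ext fun j => ?_
    rw [LinearMap.smulRight_apply, hb, hf j j.is_le]
    split_ifs with h
    · rw [h, one_smul]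
      exact (hE i).1 _ (hv i hi).1
    · rw [zero_smul]
      exact (hE i).2 j h _ (hv j j.is_le).1
  refine ⟨f, hf, fun X => ?_⟩
  rw [hEi, show X * f.smulRight (v i) = f.smulRight (X (v i)) by ext; simp,
    LinearMap.trace_smulRight]

lemma exists_forall_mem_apply_eq_smul_of_finrank_eq_one {S : Submodule F V}
    (hS : Module.finrank F S = 1) {T : Module.End F V} (hT : ∀ v ∈ S, T v ∈ S) :
    ∃ t : F, ∀ v ∈ S, T v = t • v := by
  obtain ⟨t, ht⟩ := ((T.restrict hT).existsUnique_eq_smul_id_of_finrank_eq_one hS).exists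
  exact ⟨t, fun v hv => congrArg Subtype.val (LinearMap.congr_fun ht ⟨v, hv⟩)⟩

lemma IsLRPairWith.exists_isParamSeq {d : ℕ} {A B : Module.End F V} {D : LRDecomp F V d}
    (h : IsLRPairWith A B D) : ∃ φ : ℕ → F, IsParamSeq A B D φ := by
  have hBA : ∀ i, 1 ≤ i → i ≤ d → ∃ t : F, ∀ v ∈ D.sub i, B (A v) = t • v := by
    intro i h1 hd
    obtain ⟨j, rfl⟩ : ∃ j, i = j + 1 := ⟨i - 1, by omega⟩
    refine exists_forall_mem_apply_eq_smul_of_finrank_eq_one (T := B * A) (D.finrank_eq_one _ hd)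
      fun v hv => ?_
    rw [← h.2 j (by omega)]
    exact Submodule.mem_map_of_mem (h.1.2 j (by omega) ▸ Submodule.mem_map_of_mem hv)
  choose! t ht using hBA
  refine ⟨fun i => if 1 ≤ i ∧ i ≤ d then t i else 0, by simp, by simp, fun i h1 hd => ?_⟩
  simpa [h1, hd] using ht i h1 hd

namespace IsParamSeq

variable {d : ℕ} {A B : Module.End F V} {D : LRDecomp F V d} {φ : ℕ → F} {v : ℕ → V}

lemma apply_of_isLRBasisFor (hφ : IsParamSeq A B D φ) (hB : Raises B D)
    (hv : IsLRBasisFor A D v) {k : ℕ} (hk : k ≤ d) : B (v k) = φ (k + 1) • v (k + 1) := by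
  rcases hk.lt_or_eq with hk | rfl
  · have hA : A (v (k + 1)) = v k := hv.2 (k + 1) (by omega) hk
    rw [← hA]
    exact hφ.2.2 _ (by omega) hk _ (hv.1 _ hk).1
  · have hmem := Submodule.mem_map_of_mem (f := B) (hv.1 k le_rfl).1
    rw [hB k le_rfl, D.eq_bot_of_gt _ (by omega), Submodule.mem_bot] at hmem
    rw [hmem, hφ.2.1, zero_smul]

lemma apply_of_isLRBasisRev (hφ : IsParamSeq A B D φ) (hA : Lowers A D)
    (hv : IsLRBasisRev B D v) {k : ℕ} (hk : k ≤ d) : A (v k) = φ (d - k) • v (k + 1) := by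
  rcases hk.lt_or_eq with hk | rfl
  · have hmem : A (v k) ∈ D.sub (d - (k + 1)) := by
      rw [← hA.2 _ (by omega : d - (k + 1) < d), show d - (k + 1) + 1 = d - k by omega]
      exact Submodule.mem_map_of_mem (hv.1 k hk.le).1
    obtain ⟨t, ht⟩ := Submodule.mem_span_singleton.mp <|
      eq_span_singleton_of_mem_of_finrank_eq_one (D.finrank_eq_one _ (by omega))
        (hv.1 (k + 1) hk).1 (hv.1 (k + 1) hk).2 ▸ hmem
    have hB : B (v (k + 1)) = v k := hv.2 (k + 1) (by omega) hk
    have hBA := hφ.2.2 (d - k) (by omega) (by omega) _ (hv.1 k hk.le).1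
    rw [← ht, map_smul, hB] at hBA
    rw [← ht, smul_left_injective F (hv.1 k hk.le).2 hBA]
  · have hmem := Submodule.mem_map_of_mem (f := A) (hv.1 k le_rfl).1
    rw [Nat.sub_self, hA.1, Submodule.mem_bot] at hmem
    rw [hmem, Nat.sub_self, hφ.1, zero_smul]

end IsParamSeq

lemma sum_range_mul_eq_of_forall_lt {α c g : ℕ → F} {i : ℕ} (hc₀ : c 0 = 0)
    (hg : ∀ k < i, g k = if k + 1 = i then c i else 0) :
    ∑ k ∈ Finset.range i, α (i - k) * g k = α 1 * c i := by
  rw [Finset.sum_congr rfl fun k hk => by rw [hg k (Finset.mem_range.mp hk)]]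
  cases i with
  | zero => simp [hc₀]
  | succ m => simp

namespace IsToeplitzTransition

variable {d : ℕ} {u w : ℕ → V} {α : ℕ → F}

lemma apply_zero_eq_one (h : IsToeplitzTransition d u w α) (h₀ : u 0 = w 0) (hw : w 0 ≠ 0) :
    α 0 = 1 := by
  have h0 := h 0 d.zero_le
  rw [Finset.sum_range_one, Nat.sub_self, h₀] at h0
  exact smul_left_injective F hw (by simpa using h0.symm)

lemma eq_sub_sum (h : IsToeplitzTransition d u w α) (h₀ : α 0 = 1) {m : ℕ} (hm : m ≤ d) :
    u m = w m - ∑ k ∈ Finset.range m, α (m - k) • u k := by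
  rw [h m hm, Finset.sum_range_succ, Nat.sub_self, h₀, one_smul, add_sub_cancel_left]

section TargetCoord

variable {f : Module.Dual F V} {i : ℕ}

lemma dual_apply_source_of_le (h : IsToeplitzTransition d u w α) (h₀ : α 0 = 1) (hi : i ≤ d)
    (hf : ∀ j ≤ d, f (w j) = if j = i then 1 else 0) {m : ℕ} (hm : m ≤ i) :
    f (u m) = if m = i then 1 else 0 := by
  induction m using Nat.strong_induction_on with
  | _ m ih =>
    rw [h.eq_sub_sum h₀ (hm.trans hi), map_sub, map_sum, hf m (hm.trans hi),
      Finset.sum_eq_zero, sub_zero]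
    intro k hk
    have hk := Finset.mem_range.mp hk
    rw [map_smul, ih k hk (by omega), if_neg (by omega), smul_zero]

lemma dual_apply_source_succ (h : IsToeplitzTransition d u w α) (h₀ : α 0 = 1) (hi : i < d)
    (hf : ∀ j ≤ d, f (w j) = if j = i then 1 else 0) : f (u (i + 1)) = -α 1 := by
  rw [h.eq_sub_sum h₀ hi, map_sub, map_sum, hf _ hi, if_neg (by omega), Finset.sum_range_succ,
    Finset.sum_eq_zero, map_smul, h.dual_apply_source_of_le h₀ hi.le hf le_rfl, if_pos rfl]
  · simp
  intro k hk
  have hk := Finset.mem_range.mp hk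
  rw [map_smul, h.dual_apply_source_of_le h₀ hi.le hf hk.le, if_neg hk.ne, smul_zero]

lemma dual_apply_target_of_shift (h : IsToeplitzTransition d u w α) (h₀ : α 0 = 1)
    (hi : i ≤ d) (hf : ∀ j ≤ d, f (w j) = if j = i then 1 else 0) {X : Module.End F V}
    {c : ℕ → F} (hX : ∀ k ≤ d, X (u k) = c (k + 1) • u (k + 1)) (hc₀ : c 0 = 0)
    (hcd : c (d + 1) = 0) : f (X (w i)) = α 1 * (c i - c (i + 1)) := by
  have hlast : f (X (u i)) = -(α 1 * c (i + 1)) := by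
    rw [hX i hi, map_smul, smul_eq_mul]
    rcases hi.lt_or_eq with hi | rfl
    · rw [h.dual_apply_source_succ h₀ hi hf, mul_neg, mul_comm]
    · rw [hcd, zero_mul, mul_zero, neg_zero]
  have hinit : ∀ k < i, f (X (u k)) = if k + 1 = i then c i else 0 := by
    intro k hk
    rw [hX k (by omega), map_smul, h.dual_apply_source_of_le h₀ hi hf hk, smul_eq_mul]
    split_ifs with hki
    · subst hki
      rw [mul_one]
    · rw [mul_zero]
  rw [h i hi, Finset.sum_range_succ, Nat.sub_self, h₀, one_smul]
  simp only [map_add, map_sum, map_smul, smul_eq_mul]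
  rw [sum_range_mul_eq_of_forall_lt hc₀ hinit, hlast]
  ring

end TargetCoord

section SourceCoord

variable {f : Module.Dual F V} {i : ℕ}

lemma dual_apply_target (h : IsToeplitzTransition d u w α)
    (hf : ∀ j ≤ d, f (u j) = if j = i then 1 else 0) {j : ℕ} (hj : j ≤ d) :
    f (w j) = if i ≤ j then α (j - i) else 0 := by
  rw [h j hj, map_sum]
  rw [Finset.sum_congr rfl fun k hk => by
    rw [map_smul, hf k (by have := Finset.mem_range.mp hk; omega), smul_eq_mul, mul_ite, mul_one,
      mul_zero]]
  simp [eq_comm]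

lemma dual_apply_source_of_lt (h : IsToeplitzTransition d u w α) (h₀ : α 0 = 1) (hi : i ≤ d)
    (hf : ∀ j ≤ d, f (u j) = if j = i then 1 else 0) {X : Module.End F V} {c : ℕ → F}
    (hX : ∀ k ≤ d, X (w k) = c (k + 1) • w (k + 1)) {k : ℕ} (hk : k < i) :
    f (X (u k)) = if k + 1 = i then c i else 0 := by
  induction k using Nat.strong_induction_on with
  | _ k ih =>
    rw [h.eq_sub_sum h₀ (by omega)]
    simp only [map_sub, map_sum, map_smul, smul_eq_mul]
    rw [hX k (by omega), map_smul, h.dual_apply_target hf (by omega), smul_eq_mul,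
      Finset.sum_eq_zero, sub_zero]
    · by_cases hki : k + 1 = i
      · subst hki
        simp [h₀]
      · rw [if_neg (by omega), if_neg hki, mul_zero]
    · intro l hl
      have hl := Finset.mem_range.mp hl
      rw [ih l hl (by omega), if_neg (by omega), mul_zero]

lemma dual_apply_source_of_shift (h : IsToeplitzTransition d u w α) (h₀ : α 0 = 1)
    (hi : i ≤ d) (hf : ∀ j ≤ d, f (u j) = if j = i then 1 else 0) {X : Module.End F V}
    {c : ℕ → F} (hX : ∀ k ≤ d, X (w k) = c (k + 1) • w (k + 1)) (hc₀ : c 0 = 0)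
    (hcd : c (d + 1) = 0) : f (X (u i)) = α 1 * (c (i + 1) - c i) := by
  have hfirst : f (X (w i)) = c (i + 1) * α 1 := by
    rw [hX i hi, map_smul, smul_eq_mul]
    rcases hi.lt_or_eq with hi | rfl
    · rw [h.dual_apply_target hf (j := i + 1) hi, if_pos (by omega), Nat.add_sub_cancel_left]
    · rw [hcd, zero_mul, zero_mul]
  rw [h.eq_sub_sum h₀ hi]
  simp only [map_sub, map_sum, map_smul, smul_eq_mul]
  rw [sum_range_mul_eq_of_forall_lt hc₀ fun k hk => h.dual_apply_source_of_lt h₀ hi hf hX hk,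
    hfirst]
  ring

end SourceCoord

end IsToeplitzTransition

namespace IsIdemSeq

variable {d : ℕ} {A C : Module.End F V} {D D' : LRDecomp F V d} {E : ℕ → Module.End F V}
  {ψ α : ℕ → F} {u w : ℕ → V} {i : ℕ}

lemma trace_mul_eq_of_lowers (hC : Lowers C D') (hψ : IsParamSeq C A D' ψ) (hE : IsIdemSeq D E)
    (hu : IsLRBasisRev A D' u) (hw : IsLRBasisFor A D w) (hc : u 0 = w 0)
    (hα : IsToeplitzTransition d u w α) (hi : i ≤ d) :
    LinearMap.trace F V (C * E i) = α 1 * (ψ (d - i + 1) - ψ (d - i)) := by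
  obtain ⟨f, hf, htr⟩ := hE.exists_dual_trace_mul_eq hw.1 hi
  have hα₀ := hα.apply_zero_eq_one hc (hw.1 0 d.zero_le).2
  rw [htr, hα.dual_apply_target_of_shift hα₀ hi hf (c := fun j => ψ (d + 1 - j))
    (fun k hk => by simpa using hψ.apply_of_isLRBasisRev hC hu hk) (by simpa using hψ.2.1)
    (by simpa using hψ.1), Nat.add_sub_add_right, Nat.sub_add_comm hi]

lemma trace_mul_eq_of_raises (hA : Raises A D') (hψ : IsParamSeq C A D' ψ) (hE : IsIdemSeq D E)
    (hu : IsLRBasisRev C D u) (hw : IsLRBasisFor C D' w) (hc : u 0 = w 0)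
    (hα : IsToeplitzTransition d u w α) (hi : i ≤ d) :
    LinearMap.trace F V (A * E i) = α 1 * (ψ (d - i + 1) - ψ (d - i)) := by
  have hv : ∀ j ≤ d, u (d - j) ∈ D.sub j ∧ u (d - j) ≠ 0 := fun j hj => by
    simpa [Nat.sub_sub_self hj] using hu.1 (d - j) (Nat.sub_le d j)
  obtain ⟨f, hf, htr⟩ := hE.exists_dual_trace_mul_eq hv hi
  have hf' : ∀ j ≤ d, f (u j) = if j = d - i then 1 else 0 := fun j hj => by
    have hfj := hf (d - j) (Nat.sub_le d j)
    rw [Nat.sub_sub_self hj] at hfj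
    rw [hfj]
    exact if_congr (by omega) rfl rfl
  have hα₀ := hα.apply_zero_eq_one hc (hw.1 0 d.zero_le).2
  rw [htr, hα.dual_apply_source_of_shift hα₀ (Nat.sub_le d i) hf'
    (fun k hk => hψ.apply_of_isLRBasisFor hA hw hk) hψ.1 hψ.2.1]

end IsIdemSeq

theorem stmt18_general
    {F : Type*} [Field F] {V : Type*} [AddCommGroup V] [Module F V]
    {d : ℕ}
    (A B C : Module.End F V) (DAB DBC DCA : LRDecomp F V d)
    (hAB : IsLRPairWith A B DAB) (hCA : IsLRPairWith C A DCA)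
    (E E' : ℕ → Module.End F V)
    (hE : IsIdemSeq DAB E) (hE' : IsIdemSeq DBC E')
    (u₁ w₁ u₂ w₂ u₃ w₃ : ℕ → V) (α α' α'' : ℕ → F)
    (hu₁ : IsLRBasisRev C DBC u₁) (hw₁ : IsLRBasisFor C DCA w₁) (hc₁ : u₁ 0 = w₁ 0)
    (hα : IsToeplitzTransition d u₁ w₁ α)
    (hu₂ : IsLRBasisRev A DCA u₂) (hw₂ : IsLRBasisFor A DAB w₂) (hc₂ : u₂ 0 = w₂ 0)
    (hα' : IsToeplitzTransition d u₂ w₂ α')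
    (hu₃ : IsLRBasisRev B DAB u₃) (hw₃ : IsLRBasisFor B DBC w₃) (hc₃ : u₃ 0 = w₃ 0)
    (hα'' : IsToeplitzTransition d u₃ w₃ α'')
    (hnorm : α 1 = 1 ∧ α' 1 = 1 ∧ α'' 1 = 1)
    (φ : ℕ → F) (hφ : IsParamSeq A B DAB φ) :
    ∀ i ≤ d, LinearMap.trace F V (C * E i) = φ (d - i + 1) - φ (d - i) := by
  intro i hi
  obtain ⟨hα₁, hα'₁, hα''₁⟩ := hnorm
  obtain ⟨ψ, hψ⟩ := hCA.exists_isParamSeq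
  calc LinearMap.trace F V (C * E i)
      = α' 1 * (ψ (d - i + 1) - ψ (d - i)) :=
        hE.trace_mul_eq_of_lowers hCA.1 hψ hu₂ hw₂ hc₂ hα' hi
    _ = α 1 * (ψ (d - i + 1) - ψ (d - i)) := by rw [hα₁, hα'₁]
    _ = LinearMap.trace F V (A * E' i) :=
        (hE'.trace_mul_eq_of_raises hCA.2 hψ hu₁ hw₁ hc₁ hα hi).symm
    _ = α'' 1 * (φ (d - i + 1) - φ (d - i)) :=
        hE'.trace_mul_eq_of_lowers hAB.1 hφ hu₃ hw₃ hc₃ hα'' hi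
    _ = φ (d - i + 1) - φ (d - i) := by rw [hα''₁, one_mul]

theorem stmt18
    {F : Type*} [Field F] {V : Type*} [AddCommGroup V] [Module F V]
    [FiniteDimensional F V] {d : ℕ} (hdim : Module.finrank F V = d + 1)
    (A B C : Module.End F V) (DAB DBC DCA : LRDecomp F V d)
    (hAB : IsLRPairWith A B DAB) (hBC : IsLRPairWith B C DBC) (hCA : IsLRPairWith C A DCA)
    (E E' E'' : ℕ → Module.End F V)
    (hE : IsIdemSeq DAB E) (hE' : IsIdemSeq DBC E') (hE'' : IsIdemSeq DCA E'')
    (hnonbip : ¬ IsBipartite d A B C E E' E'')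
    (u₁ w₁ u₂ w₂ u₃ w₃ : ℕ → V) (α α' α'' : ℕ → F)
    (hu₁ : IsLRBasisRev C DBC u₁) (hw₁ : IsLRBasisFor C DCA w₁) (hc₁ : u₁ 0 = w₁ 0)
    (hα : IsToeplitzTransition d u₁ w₁ α)
    (hu₂ : IsLRBasisRev A DCA u₂) (hw₂ : IsLRBasisFor A DAB w₂) (hc₂ : u₂ 0 = w₂ 0)
    (hα' : IsToeplitzTransition d u₂ w₂ α')
    (hu₃ : IsLRBasisRev B DAB u₃) (hw₃ : IsLRBasisFor B DBC w₃) (hc₃ : u₃ 0 = w₃ 0)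
    (hα'' : IsToeplitzTransition d u₃ w₃ α'')
    (hnorm : α 1 = 1 ∧ α' 1 = 1 ∧ α'' 1 = 1)
    (φ : ℕ → F) (hφ : IsParamSeq A B DAB φ) :
    ∀ i ≤ d, LinearMap.trace F V (C * E i) = φ (d - i + 1) - φ (d - i) :=
  stmt18_general A B C DAB DBC DCA hAB hCA E E' hE hE' u₁ w₁ u₂ w₂ u₃ w₃ α α' α'' hu₁ hw₁ hc₁ hα hu₂
    hw₂ hc₂ hα' hu₃ hw₃ hc₃ hα'' hnorm φ hφ
end
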